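/- arXiv:1601.00052 — 2 statements merged into one kernel-verified Lean document; each statement's English description precedes it below -/
import Mathlib

section
/- For a partition λ with at most n parts, ∏_{1≤i<j≤n} (q t^{j−i}; q)_{λ_i − λ_j} / (q t^{j−i−1}; q)_{λ_i − λ_j} = ∏_{s ∈ λ} (1 − q^{a'(s)+1} t^{n−1−l'(s)}) / (1 − q^{a(s)+1} t^{l(s)}), where for a cell s = (i, j) of λ, the arm a(s) = λ_i − j, the leg l(s) = λ'_j − i (λ' the conjugate partition), a'(s) = j − 1, and l'(s) = i − 1. -/
/-!
For a fixed row `i`, write `(q t^d; q)_{λ_i - λ_j}` as the product of `1 - q^{λ_i - c} t^d` over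
the cells `c ∈ [λ_j, λ_i)` of row `i` lying outside row `j`. Exchanging the two products, a cell
`c` of row `i` collects the rows `j` with `λ_j ≤ c`, i.e. `j ≥ λ'_{c+1}`, so its ratios
`(1 - q^{a+1} t^{j-i}) / (1 - q^{a+1} t^{j-i-1})` telescope to
`(1 - q^{a+1} t^{n-1-i}) / (1 - q^{a+1} t^{l})`, where `a + 1 = λ_i - c` and `l = λ'_{c+1} - i - 1`
is the leg. Reflecting `c ↦ λ_i - 1 - c` turns the numerators into those with `q^{a'+1}`.
-/

open Finset

noncomputable section

/-- Finite q-Pochhammer symbol `(a; q)_m = ∏_{k=0}^{m-1} (1 - a q^k)`. -/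
def qPoch (a q : ℂ) (m : ℕ) : ℂ := ∏ k ∈ Finset.range m, (1 - a * q ^ k)

/-- Column lengths of the conjugate partition: `λ'_{j+1}` for 0-based column `j`. -/
def conjPart (n : ℕ) (lam : Fin n → ℕ) (j : ℕ) : ℕ :=
  (Finset.univ.filter fun i : Fin n => j < lam i).card

section Products

variable {M : Type*} [CommMonoid M]

theorem prod_Ico_succ_mul_eq_mul_prod_Ico (f : ℕ → M) {a b : ℕ} (hab : a ≤ b) :
    (∏ j ∈ Ico a b, f (j + 1)) * f a = f b * ∏ j ∈ Ico a b, f j := by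
  rw [prod_Ico_add', mul_comm, ← prod_eq_prod_Ico_succ_bot (by omega), prod_Ico_succ_top hab,
    mul_comm]

theorem prod_filter_fst_lt_snd (n : ℕ) (R : ℕ → ℕ → M) :
    ∏ p ∈ univ.filter (fun p : Fin n × Fin n => p.1 < p.2), R p.1 p.2 =
      ∏ i : Fin n, ∏ j ∈ Ico ((i : ℕ) + 1) n, R i j := by
  simp only [prod_filter, Fintype.prod_prod_type, Fin.lt_def]
  refine prod_congr rfl fun i _ => ?_
  rw [Fin.prod_univ_eq_prod_range (fun j => if (i : ℕ) < j then R i j else 1), ← prod_filter]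
  congr 1
  ext j
  simp only [mem_filter, mem_range, mem_Ico]
  omega

end Products

theorem qPoch_mul_pow_eq_prod (q t : ℂ) (d r : ℕ) :
    qPoch (q * t ^ d) q r = ∏ k ∈ range r, (1 - q ^ (k + 1) * t ^ d) :=
  prod_congr rfl fun k _ => by ring

theorem qPoch_sub_eq_prod_Ico (q t : ℂ) (d μ L : ℕ) :
    qPoch (q * t ^ d) q (L - μ) = ∏ c ∈ Ico μ L, (1 - q ^ (L - c) * t ^ d) := by
  rcases le_or_gt μ L with hμ | hμ
  · rw [prod_Ico_reflect (fun k => 1 - q ^ k * t ^ d) μ (Nat.le_succ L), qPoch_mul_pow_eq_prod,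
      ← Nat.Ico_zero_eq_range, prod_Ico_add' (fun k => 1 - q ^ k * t ^ d)]
    congr 2 <;> omega
  · simp [qPoch, Nat.sub_eq_zero_of_le hμ.le, Ico_eq_empty_of_le hμ.le]

theorem Antitone.exists_nat_extension {n : ℕ} {lam : Fin n → ℕ} (h : Antitone lam) :
    ∃ Λ : ℕ → ℕ, Antitone Λ ∧ lam = fun i : Fin n => Λ i := by
  refine ⟨fun k => if hk : k < n then lam ⟨k, hk⟩ else 0, fun a b hab => ?_, ?_⟩
  · by_cases hb : b < n
    · simp only [hb, lt_of_le_of_lt hab hb, dite_true]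
      exact h hab
    · simp only [hb, dite_false, zero_le]
  · funext i
    simp [i.isLt]

section Conjugate

variable {Λ : ℕ → ℕ} {n : ℕ}

theorem conjPart_le (c : ℕ) : conjPart n (fun k : Fin n => Λ k) c ≤ n :=
  (card_filter_le _ _).trans (by simp)

theorem lt_iff_lt_conjPart (hΛ : Antitone Λ) {k : ℕ} (hk : k < n) (c : ℕ) :
    c < Λ k ↔ k < conjPart n (fun i : Fin n => Λ i) c := by
  simp only [conjPart]
  constructor
  · intro hc
    calc k < #(Iic (⟨k, hk⟩ : Fin n)) := by simp
      _ ≤ _ := card_le_card fun i hi => by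
        simp only [mem_Iic, Fin.le_def, mem_filter, mem_univ, true_and] at hi ⊢
        exact hc.trans_le (hΛ hi)
  · intro hlt
    by_contra! hc
    have : #(univ.filter fun i : Fin n => c < Λ i) ≤ #(Iio (⟨k, hk⟩ : Fin n)) :=
      card_le_card fun i hi => by
        simp only [mem_Iio, Fin.lt_def, mem_filter, mem_univ, true_and] at hi ⊢
        by_contra! hki
        exact lt_irrefl c (hi.trans_le ((hΛ hki).trans hc))
    rw [Fin.card_Iio, Fin.val_mk] at this
    omega

theorem prod_Ico_prod_Ico_eq_prod_range_prod_Ico (hΛ : Antitone Λ) {i : ℕ} (hi : i < n)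
    {M : Type*} [CommMonoid M] (F : ℕ → ℕ → M) :
    ∏ j ∈ Ico (i + 1) n, ∏ c ∈ Ico (Λ j) (Λ i), F j c =
      ∏ c ∈ range (Λ i), ∏ j ∈ Ico (conjPart n (fun k : Fin n => Λ k) c) n, F j c := by
  refine prod_comm' fun j c => ?_
  have hle : ∀ j < n, Λ j ≤ c ↔ conjPart n (fun k : Fin n => Λ k) c ≤ j := fun j hj => by
    simpa only [not_lt] using (lt_iff_lt_conjPart hΛ hj c).not
  simp only [mem_Ico, mem_range]
  constructor
  · rintro ⟨⟨-, hjn⟩, hjc, hci⟩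
    exact ⟨⟨(hle j hjn).1 hjc, hjn⟩, hci⟩
  · rintro ⟨⟨hpj, hjn⟩, hci⟩
    have hip := (lt_iff_lt_conjPart hΛ hi c).1 hci
    exact ⟨⟨by omega, hjn⟩, (hle j hjn).2 hpj, hci⟩

end Conjugate

section Row

variable {Λ : ℕ → ℕ} (q t : ℂ) {n i : ℕ}

theorem row_mul_identity (hΛ : Antitone Λ) (hi : i < n) :
    (∏ j ∈ Ico (i + 1) n, qPoch (q * t ^ (j - i)) q (Λ i - Λ j)) *
        ∏ c ∈ range (Λ i),
          (1 - q ^ (Λ i - c) * t ^ (conjPart n (fun k : Fin n => Λ k) c - (i + 1))) =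
      qPoch (q * t ^ (n - 1 - i)) q (Λ i) *
        ∏ j ∈ Ico (i + 1) n, qPoch (q * t ^ (j - i - 1)) q (Λ i - Λ j) := by
  set f : ℕ → ℕ → ℂ := fun c d => 1 - q ^ (Λ i - c) * t ^ d
  have hnum : qPoch (q * t ^ (n - 1 - i)) q (Λ i) = ∏ c ∈ range (Λ i), f c (n - 1 - i) := by
    simpa using qPoch_sub_eq_prod_Ico q t (n - 1 - i) 0 (Λ i)
  simp only [qPoch_sub_eq_prod_Ico, hnum,
    prod_Ico_prod_Ico_eq_prod_range_prod_Ico hΛ hi, ← prod_mul_distrib]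
  refine prod_congr rfl fun c _ => ?_
  simpa [Nat.sub_sub, Nat.add_sub_add_right, show n - 1 - i = n - (i + 1) by omega] using
    prod_Ico_succ_mul_eq_mul_prod_Ico (fun d => f c (d - (i + 1))) (conjPart_le c)

theorem row_div_identity (hΛ : Antitone Λ) (hi : i < n)
    (hden : ∀ c < Λ i,
      1 - q ^ (Λ i - c) * t ^ (conjPart n (fun k : Fin n => Λ k) c - (i + 1)) ≠ 0)
    (hden' : ∀ j ∈ Ico (i + 1) n, qPoch (q * t ^ (j - i - 1)) q (Λ i - Λ j) ≠ 0) :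
    ∏ j ∈ Ico (i + 1) n,
        qPoch (q * t ^ (j - i)) q (Λ i - Λ j) / qPoch (q * t ^ (j - i - 1)) q (Λ i - Λ j) =
      ∏ c ∈ range (Λ i), (1 - q ^ (c + 1) * t ^ (n - 1 - i)) /
        (1 - q ^ (Λ i - c) * t ^ (conjPart n (fun k : Fin n => Λ k) c - (i + 1))) := by
  rw [prod_div_distrib, prod_div_distrib, ← qPoch_mul_pow_eq_prod,
    div_eq_div_iff (prod_ne_zero_iff.2 hden')
      (prod_ne_zero_iff.2 fun c hc => hden c (mem_range.1 hc))]
  exact row_mul_identity q t hΛ hi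

end Row

/-- Cells are `(i, j)` with 0-based coordinates: `a(s) + 1 = λ_i - j`, `l(s) = λ'_{j+1} - (i+1)`,
`a'(s) = j`, `l'(s) = i`. -/
theorem double_product_arm_leg (n : ℕ) (lam : Fin n → ℕ) (hpart : Antitone lam)
    (q t : ℂ)
    (hden : ∀ (i : Fin n) (j : ℕ), j < lam i →
      1 - q ^ (lam i - j) * t ^ (conjPart n lam j - ((i : ℕ) + 1)) ≠ 0)
    (hden' : ∀ p : Fin n × Fin n, p.1 < p.2 →
      qPoch (q * t ^ ((p.2 : ℕ) - (p.1 : ℕ) - 1)) q (lam p.1 - lam p.2) ≠ 0) :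
    (∏ p ∈ Finset.univ.filter (fun p : Fin n × Fin n => p.1 < p.2),
        qPoch (q * t ^ ((p.2 : ℕ) - (p.1 : ℕ))) q (lam p.1 - lam p.2) /
          qPoch (q * t ^ ((p.2 : ℕ) - (p.1 : ℕ) - 1)) q (lam p.1 - lam p.2)) =
      ∏ i : Fin n, ∏ j ∈ Finset.range (lam i),
        (1 - q ^ (j + 1) * t ^ (n - 1 - (i : ℕ))) /
          (1 - q ^ (lam i - j) * t ^ (conjPart n lam j - ((i : ℕ) + 1))) := by
  obtain ⟨Λ, hΛ, rfl⟩ := hpart.exists_nat_extension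
  rw [prod_filter_fst_lt_snd n fun i j =>
    qPoch (q * t ^ (j - i)) q (Λ i - Λ j) / qPoch (q * t ^ (j - i - 1)) q (Λ i - Λ j)]
  refine prod_congr rfl fun i _ => row_div_identity q t hΛ i.isLt (hden i) fun j hj => ?_
  have hj' := mem_Ico.1 hj
  exact hden' (i, ⟨j, hj'.2⟩) (Fin.lt_def.2 hj'.1)

end
end

section
/- For a partition λ with at most n parts, ∏_{1≤i<j≤n} (t^{j−i}; q)_{λ_i − λ_j} / (t^{j−i+1}; q)_{λ_i − λ_j} = ∏_{s ∈ λ} (1 − q^{a(s)} t^{l(s)+1}) / (1 − q^{a'(s)} t^{n − l'(s)}), where a(s), l(s), a'(s), l'(s) denote the arm, leg, arm colength, and leg colength of the cell s in λ. -/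
open Finset

noncomputable section

/-!
Cross-multiplied, both sides are products over the cells `(i, c)`, `c < λ_i`, of row `i`
(with the column read from the right, `c ↦ λ_i - 1 - c`): the Pochhammer symbol
`(x; q)_{λ_i - λ_j}` contributes `1 - x q^c` exactly for the rows `j > i` with `c < λ_i - λ_j`.
These rows are the `j ≥ K = λ'` of column `λ_i - 1 - c`, i.e. the rows below the leg of that
cell, so for a fixed cell the quotient of the two Pochhammer products telescopes in `j`
to `(1 - q^c t^{K - i}) / (1 - q^c t^{n - i})`, which is the cell's factor.
-/

theorem Finset.prod_Ico_mul_eq_mul_prod_Ico_succ {M : Type*} [CommMonoid M] (f : ℕ → M)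
    {a b : ℕ} (hab : a ≤ b) :
    (∏ k ∈ Ico a b, f k) * f b = f a * ∏ k ∈ Ico a b, f (k + 1) := by
  rw [← prod_Ico_succ_top hab, prod_eq_prod_Ico_succ_bot (Nat.lt_succ_of_le hab),
    prod_Ico_add']

theorem Fin.prod_filter_le_val {M : Type*} [CommMonoid M] (f : ℕ → M) (n K : ℕ) :
    ∏ j ∈ univ.filter (fun j : Fin n => K ≤ (j : ℕ)), f j = ∏ k ∈ Ico K n, f k := by
  have himage : (univ.filter (fun j : Fin n => K ≤ (j : ℕ))).map Fin.valEmbedding = Ico K n := by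
    ext k
    simp only [mem_map, mem_filter, mem_univ, true_and, Fin.valEmbedding_apply, mem_Ico]
    exact ⟨by rintro ⟨j, hj, rfl⟩; exact ⟨hj, j.isLt⟩, fun hk => ⟨⟨k, hk.2⟩, hk.1, rfl⟩⟩
  rw [← himage, prod_map]
  rfl

theorem Finset.prod_prod_range_comm {ι M : Type*} [CommMonoid M] (s : Finset ι)
    (d : ι → ℕ) (L : ℕ) (hd : ∀ j ∈ s, d j ≤ L) (g : ι → ℕ → M) :
    ∏ j ∈ s, ∏ c ∈ range (d j), g j c = ∏ c ∈ range L, ∏ j ∈ s.filter (c < d ·), g j c := by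
  have hrange : ∀ j ∈ s, range (d j) = (range L).filter (· < d j) := fun j hj => by
    ext c; simp only [mem_range, mem_filter]; have := hd j hj; omega
  rw [prod_congr rfl fun j hj => by rw [hrange j hj, prod_filter], prod_comm]
  simp only [prod_filter]

section Partition

variable {n : ℕ} {lam : Fin n → ℕ}

theorem conjPart_le_iff (hlam : Antitone lam) (k : ℕ) (j : Fin n) :
    conjPart n lam k ≤ j ↔ lam j ≤ k := by
  unfold conjPart
  constructor
  · intro hcard
    by_contra! hk
    have : Iic j ⊆ univ.filter (fun i : Fin n => k < lam i) := fun i hi => by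
      simp only [mem_filter, mem_univ, true_and]
      exact hk.trans_le (hlam (mem_Iic.mp hi))
    have := card_le_card this
    rw [Fin.card_Iic] at this
    omega
  · intro hk
    have : univ.filter (fun i : Fin n => k < lam i) ⊆ Iio j := fun i hi => by
      simp only [mem_filter, mem_univ, true_and] at hi
      by_contra! hij
      exact absurd (hlam (not_lt.mp (mem_Iio.not.mp hij))) (by omega)
    simpa only [Fin.card_Iio] using card_le_card this

theorem lt_conjPart (hlam : Antitone lam) {i : Fin n} {k : ℕ} (hk : k < lam i) :
    (i : ℕ) < conjPart n lam k :=
  not_le.mp fun h => absurd ((conjPart_le_iff hlam k i).mp h) (not_le.mpr hk)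

theorem conjPart_le_card (k : ℕ) : conjPart n lam k ≤ n :=
  (card_le_univ _).trans_eq (Fintype.card_fin n)

theorem lt_and_lt_sub_iff_conjPart_le (hlam : Antitone lam) {i : Fin n} {c : ℕ}
    (hc : c < lam i) (j : Fin n) :
    (i < j ∧ c < lam i - lam j) ↔ conjPart n lam (lam i - 1 - c) ≤ j := by
  constructor
  · rintro ⟨-, hcj⟩
    rw [conjPart_le_iff hlam]
    omega
  · intro hKj
    have hj := (conjPart_le_iff hlam _ j).mp hKj
    exact ⟨Fin.lt_def.mpr ((lt_conjPart hlam (by omega)).trans_le hKj), by omega⟩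

theorem prod_qPoch_pairs (a : Fin n × Fin n → ℂ) (q : ℂ) :
    ∏ p ∈ univ.filter (fun p : Fin n × Fin n => p.1 < p.2), qPoch (a p) q (lam p.1 - lam p.2) =
      ∏ i : Fin n, ∏ c ∈ range (lam i),
        ∏ j ∈ univ.filter (fun j => i < j ∧ c < lam i - lam j), (1 - a (i, j) * q ^ c) := by
  rw [prod_filter, Fintype.prod_prod_type]
  refine prod_congr rfl fun i _ => ?_
  simp only [qPoch]
  rw [← prod_filter, prod_prod_range_comm _ _ (lam i) (fun j _ => Nat.sub_le _ _)]
  simp only [filter_filter]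

theorem cell_telescope (hlam : Antitone lam) (q t : ℂ) {i : Fin n} {c : ℕ} (hc : c < lam i) :
    (∏ j ∈ univ.filter (fun j => i < j ∧ c < lam i - lam j), (1 - t ^ ((j : ℕ) - i) * q ^ c)) *
        (1 - q ^ c * t ^ (n - (i : ℕ))) =
      (1 - q ^ c * t ^ (conjPart n lam (lam i - 1 - c) - (i : ℕ))) *
        ∏ j ∈ univ.filter (fun j => i < j ∧ c < lam i - lam j),
          (1 - t ^ ((j : ℕ) - i + 1) * q ^ c) := by
  set K := conjPart n lam (lam i - 1 - c)
  have hiK : (i : ℕ) < K := lt_conjPart hlam (by omega)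
  have hrows : univ.filter (fun j => i < j ∧ c < lam i - lam j) =
      univ.filter (fun j : Fin n => K ≤ (j : ℕ)) :=
    filter_congr fun j _ => lt_and_lt_sub_iff_conjPart_le hlam hc j
  have hshift : ∀ k ∈ Ico K n, 1 - t ^ (k - i + 1) * q ^ c = 1 - q ^ c * t ^ (k + 1 - i) :=
    fun k hk => by rw [mul_comm, Nat.sub_add_comm (hiK.le.trans (mem_Ico.mp hk).1)]
  rw [hrows, Fin.prod_filter_le_val (fun k => 1 - t ^ (k - i) * q ^ c),
    Fin.prod_filter_le_val (fun k => 1 - t ^ (k - i + 1) * q ^ c), prod_congr rfl hshift]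
  simp only [mul_comm (t ^ _) (q ^ c)]
  exact prod_Ico_mul_eq_mul_prod_Ico_succ (fun k => 1 - q ^ c * t ^ (k - i)) (conjPart_le_card _)

theorem prod_qPoch_pairs_mul_prod_cells (hlam : Antitone lam) (q t : ℂ) :
    (∏ p ∈ univ.filter (fun p : Fin n × Fin n => p.1 < p.2),
        qPoch (t ^ ((p.2 : ℕ) - (p.1 : ℕ))) q (lam p.1 - lam p.2)) *
      ∏ i : Fin n, ∏ c ∈ range (lam i), (1 - q ^ c * t ^ (n - (i : ℕ))) =
    (∏ i : Fin n, ∏ c ∈ range (lam i),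
        (1 - q ^ (lam i - 1 - c) * t ^ (conjPart n lam c - (i : ℕ)))) *
      ∏ p ∈ univ.filter (fun p : Fin n × Fin n => p.1 < p.2),
        qPoch (t ^ ((p.2 : ℕ) - (p.1 : ℕ) + 1)) q (lam p.1 - lam p.2) := by
  rw [prod_qPoch_pairs (fun p => t ^ ((p.2 : ℕ) - (p.1 : ℕ))),
    prod_qPoch_pairs (fun p => t ^ ((p.2 : ℕ) - (p.1 : ℕ) + 1)),
    ← prod_mul_distrib, ← prod_mul_distrib]
  refine prod_congr rfl fun i _ => ?_
  rw [← prod_range_reflect (fun c => 1 - q ^ (lam i - 1 - c) * t ^ (conjPart n lam c - i)),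
    ← prod_mul_distrib, ← prod_mul_distrib]
  refine prod_congr rfl fun c hc => ?_
  have hc : c < lam i := mem_range.mp hc
  rw [show lam i - 1 - (lam i - 1 - c) = c by omega]
  exact cell_telescope hlam q t hc

end Partition

-- Cells `(i, j)` are 0-based: `a(s) = λ_i - 1 - j`, `l(s) + 1 = λ'_{j+1} - i`, `a'(s) = j`, `l'(s) = i`.
/-- `∏_{1≤i<j≤n} (t^{j-i}; q)_{λ_i-λ_j} / (t^{j-i+1}; q)_{λ_i-λ_j}
 = ∏_{s∈λ} (1 - q^{a(s)} t^{l(s)+1}) / (1 - q^{a'(s)} t^{n-l'(s)})`.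
Cells are `(i, j)` with 0-based coordinates; `a(s) = λ_i - 1 - j`,
`l(s)+1 = λ'_{j+1} - i`, `a'(s) = j`, `l'(s) = i`. -/
theorem double_product_arm_leg_two (n : ℕ) (lam : Fin n → ℕ) (hpart : Antitone lam)
    (q t : ℂ)
    (hden : ∀ (i : Fin n) (j : ℕ), j < lam i →
      1 - q ^ j * t ^ (n - (i : ℕ)) ≠ 0)
    (hden' : ∀ p : Fin n × Fin n, p.1 < p.2 →
      qPoch (t ^ ((p.2 : ℕ) - (p.1 : ℕ) + 1)) q (lam p.1 - lam p.2) ≠ 0) :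
    (∏ p ∈ Finset.univ.filter (fun p : Fin n × Fin n => p.1 < p.2),
        qPoch (t ^ ((p.2 : ℕ) - (p.1 : ℕ))) q (lam p.1 - lam p.2) /
          qPoch (t ^ ((p.2 : ℕ) - (p.1 : ℕ) + 1)) q (lam p.1 - lam p.2)) =
      ∏ i : Fin n, ∏ j ∈ Finset.range (lam i),
        (1 - q ^ (lam i - 1 - j) * t ^ (conjPart n lam j - (i : ℕ))) /
          (1 - q ^ j * t ^ (n - (i : ℕ))) := by
  have hpairs : ∏ p ∈ univ.filter (fun p : Fin n × Fin n => p.1 < p.2),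
      qPoch (t ^ ((p.2 : ℕ) - (p.1 : ℕ) + 1)) q (lam p.1 - lam p.2) ≠ 0 :=
    prod_ne_zero_iff.mpr fun p hp => hden' p (mem_filter.mp hp).2
  have hcells : ∏ i : Fin n, ∏ j ∈ range (lam i), (1 - q ^ j * t ^ (n - (i : ℕ))) ≠ 0 :=
    prod_ne_zero_iff.mpr fun i _ => prod_ne_zero_iff.mpr fun j hj => hden i j (mem_range.mp hj)
  simp only [prod_div_distrib]
  rw [div_eq_div_iff hpairs hcells]
  exact prod_qPoch_pairs_mul_prod_cells hpart q t

end
end
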